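/- If a₁, a₂, a₃ are real numbers in [1/2, 3/4] satisfying the three equations 2a₁ + a₁a₂ + a₁a₃ = 1 + a₂a₃ + a₂/2 + a₃/2, 2a₂ + a₁a₂ + a₂a₃ = 1 + a₁a₃ + a₁/2 + a₃/2, and 2a₃ + a₂a₃ + a₁a₃ = 1 + a₁a₂ + a₁/2 + a₂/2, then a₁ = a₂ = a₃ = (-1 + √5)/2. -/
import Mathlib

theorem stmt_10 (a₁ a₂ a₃ : ℝ)
    (h₁ : a₁ ∈ Set.Icc (1/2 : ℝ) (3/4)) (h₂ : a₂ ∈ Set.Icc (1/2 : ℝ) (3/4))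
    (h₃ : a₃ ∈ Set.Icc (1/2 : ℝ) (3/4))
    (e₁ : 2 * a₁ + a₁ * a₂ + a₁ * a₃ = 1 + a₂ * a₃ + a₂ / 2 + a₃ / 2)
    (e₂ : 2 * a₂ + a₁ * a₂ + a₂ * a₃ = 1 + a₁ * a₃ + a₁ / 2 + a₃ / 2)
    (e₃ : 2 * a₃ + a₂ * a₃ + a₁ * a₃ = 1 + a₁ * a₂ + a₁ / 2 + a₂ / 2) :
    a₁ = (-1 + Real.sqrt 5) / 2 ∧ a₂ = (-1 + Real.sqrt 5) / 2 ∧ a₃ = (-1 + Real.sqrt 5) / 2 := by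
  obtain ⟨l₁, u₁⟩ := h₁
  obtain ⟨l₂, u₂⟩ := h₂
  obtain ⟨l₃, u₃⟩ := h₃
  have h12 : a₁ = a₂ := by
    have key : (a₁ - a₂) * (5/2 + 2 * a₃) = 0 := by linarith [e₁, e₂]
    have pos : (5/2 + 2 * a₃) > 0 := by linarith
    have := mul_eq_zero.mp key
    rcases this with h | h
    · linarith
    · linarith
  have h23 : a₂ = a₃ := by
    have key : (a₂ - a₃) * (5/2 + 2 * a₁) = 0 := by linarith [e₂, e₃]
    have pos : (5/2 + 2 * a₁) > 0 := by linarith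
    rcases mul_eq_zero.mp key with h | h
    · linarith
    · linarith
  subst h12; subst h23
  have quad : a₁ ^ 2 + a₁ - 1 = 0 := by nlinarith [e₁]
  have sq : (2 * a₁ + 1) ^ 2 = 5 := by nlinarith
  have hs : 2 * a₁ + 1 = Real.sqrt 5 := by
    have : Real.sqrt ((2 * a₁ + 1) ^ 2) = 2 * a₁ + 1 :=
      Real.sqrt_sq (by linarith)
    rw [sq] at this; linarith
  refine ⟨?_, ?_, ?_⟩ <;> linarith
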